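/- arXiv:2009.10246 — 4 statements merged into one kernel-verified Lean document; each statement's English description precedes it below -/
import Mathlib

section
/- Completeness of the general minimal-entailment calculus: for every finite-valued logic L with connectives 𝐈 and 𝐈̄ as described, every true ME-sequent Σ;Γ⇒Δ;Θ (with Σ, Θ finite sets of atoms and Γ, Δ finite theories) is derivable in the calculus ME^𝓘_L. -/
/-- A finite-valued propositional logic: a finite set of truth values with
distinguished values `t` and `f`, a set of designated values containing `t`
but not `f`, and a family of connectives with truth functions.  Atoms are
the natural numbers (a countably infinite set). -/
structure FVLogic where
  V : Type
  finV : Fintype V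
  desig : Set V
  t : V
  f : V
  t_mem : t ∈ desig
  f_not_mem : f ∉ desig
  Conn : Type
  arity : Conn → ℕ
  tf : (c : Conn) → (Fin (arity c) → V) → V

/-- Formulas of a finite-valued logic, built from atoms by applying connectives. -/
inductive FVLogic.Formula (L : FVLogic) : Type
  | atom : ℕ → FVLogic.Formula L
  | app : (c : L.Conn) → (Fin (L.arity c) → FVLogic.Formula L) → FVLogic.Formula L

namespace FVLogic

variable {L : FVLogic}

/-- The valuation extending an interpretation `I : ℕ → L.V` to all formulas. -/
def val (I : ℕ → L.V) : Formula L → L.V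
  | .atom p => I p
  | .app c args => L.tf c (fun i => val I (args i))

/-- `I` is a model of the formula `φ`. -/
def IsModel (I : ℕ → L.V) (φ : Formula L) : Prop := val I φ ∈ L.desig

/-- `I` is a model of the theory `Γ`. -/
def IsModelSet (I : ℕ → L.V) (Γ : Set (Formula L)) : Prop := ∀ φ ∈ Γ, IsModel I φ

/-- `Γ ⊨_L Δ`: every model of `Γ` is a model of some member of `Δ`. -/
def Entails (Γ Δ : Set (Formula L)) : Prop :=
  ∀ I, IsModelSet I Γ → ∃ δ ∈ Δ, IsModel I δ

/-- `J ≤^Θ I`: the atoms of `Θ` taking a value in `𝓘` under `J` are among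
those doing so under `I`. -/
def leI (𝓘 : Set L.V) (Θ : Set ℕ) (J I : ℕ → L.V) : Prop :=
  {p | p ∈ Θ ∧ J p ∈ 𝓘} ⊆ {p | p ∈ Θ ∧ I p ∈ 𝓘}

/-- `J <^Θ I`. -/
def ltI (𝓘 : Set L.V) (Θ : Set ℕ) (J I : ℕ → L.V) : Prop :=
  leI 𝓘 Θ J I ∧ ¬ leI 𝓘 Θ I J

/-- `I` is an `(𝓘;Θ)`-minimal model of `Γ`. -/
def IsMinModel (𝓘 : Set L.V) (Θ : Set ℕ) (Γ : Set (Formula L)) (I : ℕ → L.V) : Prop :=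
  IsModelSet I Γ ∧ ¬ ∃ J, IsModelSet J Γ ∧ ltI 𝓘 Θ J I

/-- Truth of the ME-sequent `Σ;Γ⇒Δ;Θ`: every `(𝓘;Θ∪Σ)`-minimal model `I` of `Γ`
with `v_I(q) ∈ 𝓘` for all `q ∈ Σ` is a model of some member of `Δ`. -/
def METrue (𝓘 : Set L.V) (S : Set ℕ) (Γ Δ : Set (Formula L)) (Θ : Set ℕ) : Prop :=
  ∀ I, IsMinModel 𝓘 (Θ ∪ S) Γ I → (∀ q ∈ S, I q ∈ 𝓘) → ∃ δ ∈ Δ, IsModel I δ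

/-- The connective `𝐈`: `v_I(𝐈φ) = t` if `v_I(φ) ∈ 𝓘`, and `= f` otherwise. -/
def IOpSpec (𝓘 : Set L.V) (opI : Formula L → Formula L) : Prop :=
  ∀ (I : ℕ → L.V) (φ : Formula L),
    (val I φ ∈ 𝓘 → val I (opI φ) = L.t) ∧ (val I φ ∉ 𝓘 → val I (opI φ) = L.f)

/-- The connective `𝐈̄`: `v_I(𝐈̄φ) = t` if `v_I(φ) ∉ 𝓘`, and `= f` otherwise. -/
def IBarOpSpec (𝓘 : Set L.V) (opIbar : Formula L → Formula L) : Prop :=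
  ∀ (I : ℕ → L.V) (φ : Formula L),
    (val I φ ∉ 𝓘 → val I (opIbar φ) = L.t) ∧ (val I φ ∈ 𝓘 → val I (opIbar φ) = L.f)

end FVLogic

open FVLogic in
/-- Derivability in the calculus `ME^𝓘_L`: the least set of ME-sequents
`Σ;Γ⇒Δ;Θ` closed under the rules (m1), (m2) and (m3), where the premisses of
(m1) and (m2) are stated semantically (using the adequacy of the underlying
sequent calculus `S_L` and anti-sequent calculus `R_L`). -/
inductive MEDeriv (L : FVLogic) (𝓘 : Set L.V) (opI opIbar : FVLogic.Formula L → FVLogic.Formula L) :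
    Set ℕ → Set (FVLogic.Formula L) → Set (FVLogic.Formula L) → Set ℕ → Prop
  | m1 {S Θ : Set ℕ} {Γ Δ : Set (Formula L)} {q : ℕ} :
      ¬ Entails (Γ ∪ (fun p => opIbar (Formula.atom p)) '' Θ) {opI (Formula.atom q)} →
      MEDeriv L 𝓘 opI opIbar (insert q S) Γ Δ Θ
  | m2 {S Θ : Set ℕ} {Γ Δ : Set (Formula L)} :
      Entails ((fun p => opI (Formula.atom p)) '' S ∪ Γ) Δ →
      MEDeriv L 𝓘 opI opIbar S Γ Δ Θ
  | m3 {S Θ : Set ℕ} {Γ Δ : Set (Formula L)} {q : ℕ} :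
      MEDeriv L 𝓘 opI opIbar (insert q S) Γ Δ Θ →
      MEDeriv L 𝓘 opI opIbar S (insert (opIbar (Formula.atom q)) Γ) Δ Θ →
      MEDeriv L 𝓘 opI opIbar S Γ Δ (insert q Θ)

/-!
Induction on `Θ`. When `Θ = ∅`, either some `q ∈ Σ` is not forced into `𝓘` by `Γ`, and (m1)
applies, or every model of `Γ` sends all of `Σ` into `𝓘`; then every model of `𝐈Σ ∪ Γ` is
`Σ`-minimal, so truth of the sequent is exactly the premiss of (m2). For `Θ = {q} ∪ Θ'`, a
minimal model either sends `q` into `𝓘` (moving `q` to `Σ`) or not, and on models of `𝐈̄q`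
the atom `q` is irrelevant to the minimality order; hence both premisses of (m3) are true
sequents.
-/

namespace FVLogic

variable {L : FVLogic} {𝓘 : Set L.V}

lemma isModel_opI_atom_iff {opI : Formula L → Formula L} (hI : IOpSpec 𝓘 opI)
    (I : ℕ → L.V) (q : ℕ) : IsModel I (opI (.atom q)) ↔ I q ∈ 𝓘 := by
  by_cases hq : I q ∈ 𝓘
  · simpa [IsModel, hq, (hI I (.atom q)).1 hq] using L.t_mem
  · simpa [IsModel, hq, (hI I (.atom q)).2 hq] using L.f_not_mem

lemma isModel_opIbar_atom_iff {opIbar : Formula L → Formula L} (hIbar : IBarOpSpec 𝓘 opIbar)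
    (I : ℕ → L.V) (q : ℕ) : IsModel I (opIbar (.atom q)) ↔ I q ∉ 𝓘 := by
  by_cases hq : I q ∈ 𝓘
  · simpa [IsModel, hq, (hIbar I (.atom q)).2 hq] using L.f_not_mem
  · simpa [IsModel, hq, (hIbar I (.atom q)).1 hq] using L.t_mem

lemma leI_insert_iff {Θ : Set ℕ} {J I : ℕ → L.V} {a : ℕ} (ha : J a ∉ 𝓘) :
    leI 𝓘 (insert a Θ) J I ↔ leI 𝓘 Θ J I := by
  constructor
  · rintro h p ⟨hp, hJp⟩
    exact ⟨hp, (h ⟨Set.mem_insert_of_mem a hp, hJp⟩).2⟩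
  · rintro h p ⟨rfl | hp, hJp⟩
    · exact absurd hJp ha
    · exact ⟨Set.mem_insert_of_mem _ hp, (h ⟨hp, hJp⟩).2⟩

lemma ltI_insert_iff {Θ : Set ℕ} {J I : ℕ → L.V} {a : ℕ} (hJ : J a ∉ 𝓘) (hI : I a ∉ 𝓘) :
    ltI 𝓘 (insert a Θ) J I ↔ ltI 𝓘 Θ J I := by
  rw [ltI, ltI, leI_insert_iff hJ, leI_insert_iff hI]

lemma isMinModel_of_forall_leI {Θ : Set ℕ} {Γ : Set (Formula L)} {I : ℕ → L.V}
    (hI : IsModelSet I Γ) (hle : ∀ J, IsModelSet J Γ → leI 𝓘 Θ I J) :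
    IsMinModel 𝓘 Θ Γ I :=
  ⟨hI, fun ⟨J, hJ, _, hnle⟩ => hnle (hle J hJ)⟩

lemma IsMinModel.of_insert_opIbar {opIbar : Formula L → Formula L}
    (hIbar : IBarOpSpec 𝓘 opIbar) {Θ : Set ℕ} {Γ : Set (Formula L)} {I : ℕ → L.V} {a : ℕ}
    (hmin : IsMinModel 𝓘 Θ (insert (opIbar (.atom a)) Γ) I) :
    IsMinModel 𝓘 (insert a Θ) Γ I := by
  obtain ⟨hmod, hnot⟩ := hmin
  have hIa : I a ∉ 𝓘 := (isModel_opIbar_atom_iff hIbar I a).1 (hmod _ (Set.mem_insert _ _))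
  refine ⟨fun φ hφ => hmod φ (Set.mem_insert_of_mem _ hφ), ?_⟩
  rintro ⟨J, hJ, hlt⟩
  have hJa : J a ∉ 𝓘 := fun hJa => hIa (hlt.1 ⟨Set.mem_insert _ _, hJa⟩).2
  refine hnot ⟨J, ?_, (ltI_insert_iff hJa hIa).1 hlt⟩
  rintro φ (rfl | hφ)
  · exact (isModel_opIbar_atom_iff hIbar J a).2 hJa
  · exact hJ φ hφ

lemma METrue.insert_left_of_insert_right {S Θ : Set ℕ} {Γ Δ : Set (Formula L)} {a : ℕ}
    (h : METrue 𝓘 S Γ Δ (insert a Θ)) : METrue 𝓘 (insert a S) Γ Δ Θ := by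
  intro I hmin hS
  rw [Set.union_insert, ← Set.insert_union] at hmin
  exact h I hmin fun q hq => hS q (Set.mem_insert_of_mem a hq)

lemma METrue.insert_opIbar_of_insert_right {opIbar : Formula L → Formula L}
    (hIbar : IBarOpSpec 𝓘 opIbar)
    {S Θ : Set ℕ} {Γ Δ : Set (Formula L)} {a : ℕ} (h : METrue 𝓘 S Γ Δ (insert a Θ)) :
    METrue 𝓘 S (insert (opIbar (.atom a)) Γ) Δ Θ := by
  intro I hmin hS
  exact h I (by simpa only [Set.insert_union] using hmin.of_insert_opIbar hIbar) hS

end FVLogic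

open FVLogic in
lemma MEDeriv.of_meTrue_empty {L : FVLogic} {𝓘 : Set L.V} {opI opIbar : Formula L → Formula L}
    (hI : IOpSpec 𝓘 opI) {S : Set ℕ} {Γ Δ : Set (Formula L)} (htrue : METrue 𝓘 S Γ Δ ∅) :
    MEDeriv L 𝓘 opI opIbar S Γ Δ ∅ := by
  by_cases hforced : ∃ q ∈ S, ¬ Entails (Γ ∪ (fun p => opIbar (.atom p)) '' ∅) {opI (.atom q)}
  · obtain ⟨q, hq, hne⟩ := hforced
    simpa only [Set.insert_eq_of_mem hq] using MEDeriv.m1 (S := S) (Δ := Δ) hne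
  · push Not at hforced
    refine .m2 fun I hmod => htrue I (isMinModel_of_forall_leI ?_ ?_) fun q hq => ?_
    · exact fun φ hφ => hmod φ (Or.inr hφ)
    · rintro J hJ p ⟨hp, -⟩
      obtain ⟨δ, rfl, hδ⟩ := hforced p (by simpa using hp) J (by simpa using hJ)
      exact ⟨hp, (isModel_opI_atom_iff hI J p).1 hδ⟩
    · exact (isModel_opI_atom_iff hI I q).1 (hmod _ (Or.inl ⟨q, hq, rfl⟩))

open FVLogic in
theorem MEDeriv.completeness_general (L : FVLogic) (𝓘 : Set L.V)
    (opI opIbar : FVLogic.Formula L → FVLogic.Formula L)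
    (hI : IOpSpec 𝓘 opI) (hIbar : IBarOpSpec 𝓘 opIbar)
    (S Θ : Set ℕ) (Γ Δ : Set (FVLogic.Formula L))
    (hΘ : Θ.Finite)
    (htrue : METrue 𝓘 S Γ Δ Θ) :
    MEDeriv L 𝓘 opI opIbar S Γ Δ Θ := by
  induction Θ, hΘ using Set.Finite.induction_on generalizing S Γ with
  | empty => exact .of_meTrue_empty hI htrue
  | insert _ _ ih =>
    exact .m3 (ih _ _ htrue.insert_left_of_insert_right)
      (ih _ _ (htrue.insert_opIbar_of_insert_right hIbar))

open FVLogic in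
/-- Completeness of the general minimal-entailment calculus `ME^𝓘_L`: every
true ME-sequent `Σ;Γ⇒Δ;Θ` (with `Σ`, `Θ` finite sets of atoms and `Γ`, `Δ`
finite theories) is derivable. -/
theorem MEDeriv.completeness (L : FVLogic) (𝓘 : Set L.V)
    (opI opIbar : FVLogic.Formula L → FVLogic.Formula L)
    (hI : IOpSpec 𝓘 opI) (hIbar : IBarOpSpec 𝓘 opIbar)
    (S Θ : Set ℕ) (Γ Δ : Set (FVLogic.Formula L))
    (hS : S.Finite) (hΘ : Θ.Finite) (hΓ : Γ.Finite) (hΔ : Δ.Finite)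
    (htrue : METrue 𝓘 S Γ Δ Θ) :
    MEDeriv L 𝓘 opI opIbar S Γ Δ Θ :=
  MEDeriv.completeness_general L 𝓘 opI opIbar hI hIbar S Θ Γ Δ hΘ htrue
end

section
/- Connection between minimal entailment and ME-sequents: for any finite-valued logic L, set 𝓘 ⊆ V of truth values, and theories Γ and Δ, one has Γ ⊨^𝓘_L Δ if and only if the ME-sequent ∅;Γ⇒Δ;Var(Γ∪Δ) is true, where Var(Γ∪Δ) is the set of all propositional atoms occurring in formulas of Γ or Δ. -/
namespace FVLogic

variable {L : FVLogic}

/-- `I` is an `𝓘`-minimal model of `Γ`, i.e. `(𝓘;A)`-minimal where `A` is the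
set of all atoms. -/
def IsMinModelUniv (𝓘 : Set L.V) (Γ : Set (Formula L)) (I : ℕ → L.V) : Prop :=
  IsMinModel 𝓘 Set.univ Γ I

/-- `Γ ⊨^𝓘_L Δ`: every `𝓘`-minimal model of `Γ` is a model of some member of `Δ`. -/
def MinEntails (𝓘 : Set L.V) (Γ Δ : Set (Formula L)) : Prop :=
  ∀ I, IsMinModelUniv 𝓘 Γ I → ∃ δ ∈ Δ, IsModel I δ

/-- The set of atoms occurring in a formula. -/
def Formula.vars : Formula L → Set ℕ
  | .atom p => {p}
  | .app _ args => ⋃ i, (args i).vars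

/-- The set of atoms occurring in a theory. -/
def vars (Γ : Set (Formula L)) : Set ℕ := ⋃ φ ∈ Γ, φ.vars

end FVLogic

/-!
Only the atoms of `Θ = Var(Γ ∪ Δ)` matter for satisfying formulas of `Γ ∪ Δ`. An `𝓘`-minimal
model of `Γ` is `(𝓘;Θ)`-minimal: a competitor on `Θ`, patched with the model's own values off
`Θ`, would be a competitor on all atoms. Conversely, a `(𝓘;Θ)`-minimal model sent to a value
outside `𝓘` on every atom off `Θ` becomes `𝓘`-minimal and satisfies the same formulas of
`Γ ∪ Δ`; if there is no value outside `𝓘`, every model is minimal.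
-/

namespace FVLogic

variable {L : FVLogic}

theorem val_congr {I J : ℕ → L.V} : ∀ {φ : Formula L}, Set.EqOn I J φ.vars → val I φ = val J φ
  | .atom p, h => h (Set.mem_singleton p)
  | .app c _, h => congrArg (L.tf c) <| funext fun i =>
      val_congr fun _ hp => h (Set.mem_iUnion.mpr ⟨i, hp⟩)

theorem subset_vars_of_mem {φ : Formula L} {Γ : Set (Formula L)} (hφ : φ ∈ Γ) :
    φ.vars ⊆ vars Γ :=
  Set.subset_biUnion_of_mem hφ

theorem vars_mono {Γ Γ' : Set (Formula L)} (h : Γ ⊆ Γ') : vars Γ ⊆ vars Γ' :=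
  Set.biUnion_subset_biUnion_left h

theorem isModel_congr {I J : ℕ → L.V} {φ : Formula L} (h : Set.EqOn I J φ.vars) :
    IsModel I φ ↔ IsModel J φ := by
  rw [IsModel, IsModel, val_congr h]

theorem isModelSet_congr {I J : ℕ → L.V} {Γ : Set (Formula L)} (h : Set.EqOn I J (vars Γ)) :
    IsModelSet I Γ ↔ IsModelSet J Γ :=
  forall₂_congr fun _ hφ => isModel_congr (h.mono (subset_vars_of_mem hφ))

theorem isModelSet_piecewise_iff {Θ : Set ℕ} [DecidablePred (· ∈ Θ)] {Γ : Set (Formula L)}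
    (hΓ : vars Γ ⊆ Θ) (I J : ℕ → L.V) :
    IsModelSet (Θ.piecewise I J) Γ ↔ IsModelSet I Γ :=
  isModelSet_congr ((Set.piecewise_eqOn Θ I J).mono hΓ)

theorem not_ltI_of_forall_mem {𝓘 : Set L.V} (h𝓘 : ∀ v, v ∈ 𝓘) (Θ : Set ℕ) (J I : ℕ → L.V) :
    ¬ ltI 𝓘 Θ J I :=
  fun hlt => hlt.2 fun _ hp => ⟨hp.1, h𝓘 _⟩

theorem isMinModel_of_forall_mem {𝓘 : Set L.V} (h𝓘 : ∀ v, v ∈ 𝓘) {Θ : Set ℕ}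
    {Γ : Set (Formula L)} {I : ℕ → L.V} (hI : IsModelSet I Γ) : IsMinModel 𝓘 Θ Γ I :=
  ⟨hI, fun ⟨J, _, hlt⟩ => not_ltI_of_forall_mem h𝓘 Θ J I hlt⟩

theorem IsMinModel.of_vars_subset {𝓘 : Set L.V} {Θ Θ' : Set ℕ} {Γ : Set (Formula L)}
    {I : ℕ → L.V} (hΓ : vars Γ ⊆ Θ) (hΘ : Θ ⊆ Θ') (hI : IsMinModel 𝓘 Θ' Γ I) :
    IsMinModel 𝓘 Θ Γ I := by
  classical
  refine ⟨hI.1, fun ⟨J, hJ, hJle, hIJ⟩ => hI.2 ⟨Θ.piecewise J I,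
    (isModelSet_piecewise_iff hΓ J I).2 hJ, ?_, fun hle => hIJ ?_⟩⟩
  · rintro p ⟨hp, hJp⟩
    by_cases hpΘ : p ∈ Θ
    · rw [Set.piecewise_eq_of_mem Θ J I hpΘ] at hJp
      exact ⟨hp, (hJle ⟨hpΘ, hJp⟩).2⟩
    · rw [Set.piecewise_eq_of_notMem Θ J I hpΘ] at hJp
      exact ⟨hp, hJp⟩
  · rintro p ⟨hpΘ, hIp⟩
    have hJp := (hle ⟨hΘ hpΘ, hIp⟩).2
    rw [Set.piecewise_eq_of_mem Θ J I hpΘ] at hJp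
    exact ⟨hpΘ, hJp⟩

theorem IsMinModel.piecewise_const {𝓘 : Set L.V} {Θ Θ' : Set ℕ} [DecidablePred (· ∈ Θ)]
    {Γ : Set (Formula L)} {I : ℕ → L.V} {w : L.V} (hΓ : vars Γ ⊆ Θ) (hΘ : Θ ⊆ Θ')
    (hw : w ∉ 𝓘) (hI : IsMinModel 𝓘 Θ Γ I) :
    IsMinModel 𝓘 Θ' Γ (Θ.piecewise I fun _ => w) := by
  have hI' : ∀ p, Θ.piecewise I (fun _ => w) p ∈ 𝓘 → p ∈ Θ ∧ I p ∈ 𝓘 := fun p hp => by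
    by_cases hpΘ : p ∈ Θ
    · rw [Set.piecewise_eq_of_mem Θ _ _ hpΘ] at hp
      exact ⟨hpΘ, hp⟩
    · rw [Set.piecewise_eq_of_notMem Θ _ _ hpΘ] at hp
      exact absurd hp hw
  refine ⟨(isModelSet_piecewise_iff hΓ I _).2 hI.1,
    fun ⟨J, hJ, hJle, hI'J⟩ => hI.2 ⟨J, hJ, ?_, fun hle => hI'J ?_⟩⟩
  · rintro p ⟨hpΘ, hJp⟩
    exact hI' p (hJle ⟨hΘ hpΘ, hJp⟩).2
  · rintro p ⟨hp, hI'p⟩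
    exact ⟨hp, (hle (hI' p hI'p)).2⟩

end FVLogic

open FVLogic in
/-- Connection between minimal entailment and ME-sequents: `Γ ⊨^𝓘_L Δ` iff the
ME-sequent `∅;Γ⇒Δ;Var(Γ∪Δ)` is true. -/
theorem minEntails_iff_meTrue (L : FVLogic) (𝓘 : Set L.V)
    (Γ Δ : Set (FVLogic.Formula L)) :
    MinEntails 𝓘 Γ Δ ↔ METrue 𝓘 (∅ : Set ℕ) Γ Δ (FVLogic.vars (Γ ∪ Δ)) := by
  classical
  set Θ := vars (Γ ∪ Δ)
  have hΓ : vars Γ ⊆ Θ := vars_mono Set.subset_union_left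
  have hΔ : ∀ δ ∈ Δ, δ.vars ⊆ Θ := fun δ hδ =>
    subset_vars_of_mem (Set.mem_union_right Γ hδ)
  rw [METrue, Set.union_empty]
  constructor
  · intro hME I hI _
    by_cases h𝓘 : ∀ v, v ∈ 𝓘
    · exact hME I (isMinModel_of_forall_mem h𝓘 hI.1)
    obtain ⟨w, hw⟩ := not_forall.1 h𝓘
    obtain ⟨δ, hδ, hI'δ⟩ := hME _ (hI.piecewise_const hΓ (Set.subset_univ Θ) hw)
    exact ⟨δ, hδ, (isModel_congr ((Set.piecewise_eqOn Θ I _).mono (hΔ δ hδ))).1 hI'δ⟩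
  · intro hMT I hI
    exact hMT I (hI.of_vars_subset hΓ (Set.subset_univ Θ)) fun _ => False.elim
end

section
/- Semantic correctness of rule (m1): for any finite-valued logic L, set 𝓘 ⊆ V, sets of atoms Σ and Θ, atom q, and theories Γ and Δ, if there exists a model J of Γ such that v_J(p) ∉ 𝓘 for every p ∈ Θ and v_J(q) ∉ 𝓘, then the ME-sequent q,Σ;Γ⇒Δ;Θ is true. -/
namespace FVLogic

variable {L : FVLogic} {𝓘 : Set L.V} {Θ S : Set ℕ} {Γ : Set (Formula L)} {I J : ℕ → L.V}

theorem leI_iff : leI 𝓘 Θ J I ↔ ∀ p ∈ Θ, J p ∈ 𝓘 → I p ∈ 𝓘 :=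
  ⟨fun h _ hp hJ => (h ⟨hp, hJ⟩).2, fun h _ hp => ⟨hp.1, h _ hp.1 hp.2⟩⟩

theorem leI_union (hJ : ∀ p ∈ Θ, J p ∉ 𝓘) (hI : ∀ p ∈ S, I p ∈ 𝓘) : leI 𝓘 (Θ ∪ S) J I := by
  rw [leI_iff]
  rintro p (hp | hp) hJp
  · exact absurd hJp (hJ p hp)
  · exact hI p hp

theorem ltI_of_leI_of_mem {p : ℕ} (hle : leI 𝓘 Θ J I) (hp : p ∈ Θ) (hIp : I p ∈ 𝓘)
    (hJp : J p ∉ 𝓘) : ltI 𝓘 Θ J I :=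
  ⟨hle, fun hge => hJp (leI_iff.mp hge p hp hIp)⟩

theorem IsMinModel.not_ltI (hI : IsMinModel 𝓘 Θ Γ I) (hJ : IsModelSet J Γ) : ¬ ltI 𝓘 Θ J I :=
  fun hlt => hI.2 ⟨J, hJ, hlt⟩

end FVLogic

open FVLogic in
/-- Semantic correctness of rule (m1): if there exists a model `J` of `Γ` such
that `v_J(p) ∉ 𝓘` for every `p ∈ Θ` and `v_J(q) ∉ 𝓘`, then the ME-sequent
`q,Σ;Γ⇒Δ;Θ` is true. -/
theorem m1_correct (L : FVLogic) (𝓘 : Set L.V) (S Θ : Set ℕ) (q : ℕ)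
    (Γ Δ : Set (FVLogic.Formula L))
    (h : ∃ J : ℕ → L.V, IsModelSet J Γ ∧ (∀ p ∈ Θ, J p ∉ 𝓘) ∧ J q ∉ 𝓘) :
    METrue 𝓘 (insert q S) Γ Δ Θ := by
  obtain ⟨J, hJ, hJΘ, hJq⟩ := h
  intro I hI hS
  have hq : q ∈ Θ ∪ insert q S := Or.inr (Set.mem_insert q S)
  have hlt : ltI 𝓘 (Θ ∪ insert q S) J I :=
    ltI_of_leI_of_mem (leI_union hJΘ hS) hq (hS q (Set.mem_insert q S)) hJq
  exact absurd hlt (hI.not_ltI hJ)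
end

section
/- Induction step of the completeness proof: for any finite-valued logic L, set 𝓘 ⊆ V, sets of atoms Σ and Θ, atom q ∉ Θ, and theories Γ and Δ, if the ME-sequent Σ;Γ⇒Δ;Θ∪{q} is true, then (a) the ME-sequent q,Σ;Γ⇒Δ;Θ is true, and (b) every (𝓘;Θ∪Σ)-minimal model I of Γ with v_I(q) ∉ 𝓘 and v_I(p) ∈ 𝓘 for all p ∈ Σ is a model of some δ ∈ Δ. -/
namespace FVLogic

variable {L : FVLogic} {𝓘 : Set L.V} {Θ Θ' : Set ℕ} {I J : ℕ → L.V} {q : ℕ}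

theorem leI_mono (hΘ : Θ' ⊆ Θ) (h : leI 𝓘 Θ J I) : leI 𝓘 Θ' J I :=
  fun _ hp => ⟨hp.1, (h ⟨hΘ hp.1, hp.2⟩).2⟩

theorem leI_insert_iff_of_notMem (hI : I q ∉ 𝓘) :
    leI 𝓘 (insert q Θ) I J ↔ leI 𝓘 Θ I J := by
  refine ⟨leI_mono (Set.subset_insert q Θ), fun h p ⟨hpΘ, hIp⟩ => ?_⟩
  rcases hpΘ with rfl | hpΘ
  · exact absurd hIp hI
  · exact ⟨Or.inr hpΘ, (h ⟨hpΘ, hIp⟩).2⟩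

theorem ltI_of_ltI_insert (hI : I q ∉ 𝓘) (h : ltI 𝓘 (insert q Θ) J I) : ltI 𝓘 Θ J I :=
  ⟨leI_mono (Set.subset_insert q Θ) h.1, (leI_insert_iff_of_notMem hI).not.mp h.2⟩

/-- Any `J` below `I` on `insert q Θ` also has `J q ∉ 𝓘`, so `q` does not affect the comparison. -/
theorem IsMinModel.insert_of_notMem {Γ : Set (Formula L)} (hmin : IsMinModel 𝓘 Θ Γ I)
    (hI : I q ∉ 𝓘) : IsMinModel 𝓘 (insert q Θ) Γ I :=
  ⟨hmin.1, fun ⟨J, hJ, hlt⟩ => hmin.2 ⟨J, hJ, ltI_of_ltI_insert hI hlt⟩⟩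

end FVLogic

open FVLogic in
theorem completeness_induction_step_general (L : FVLogic) (𝓘 : Set L.V) (S Θ : Set ℕ) (q : ℕ)
    (Γ Δ : Set (FVLogic.Formula L))
    (h : METrue 𝓘 S Γ Δ (insert q Θ)) :
    METrue 𝓘 (insert q S) Γ Δ Θ ∧
      (∀ I : ℕ → L.V, IsMinModel 𝓘 (Θ ∪ S) Γ I → I q ∉ 𝓘 → (∀ p ∈ S, I p ∈ 𝓘) →
        ∃ δ ∈ Δ, IsModel I δ) := by
  refine ⟨fun I hmin hS => ?_, fun I hmin hIq hS => ?_⟩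
  · rw [Set.union_insert, ← Set.insert_union] at hmin
    exact h I hmin fun p hp => hS p (Set.mem_insert_of_mem q hp)
  · refine h I ?_ hS
    rw [Set.insert_union]
    exact hmin.insert_of_notMem hIq

open FVLogic in
/-- Induction step of the completeness proof: if `q ∉ Θ` and the ME-sequent
`Σ;Γ⇒Δ;Θ∪{q}` is true, then (a) the ME-sequent `q,Σ;Γ⇒Δ;Θ` is true, and
(b) every `(𝓘;Θ∪Σ)`-minimal model `I` of `Γ` with `v_I(q) ∉ 𝓘` and
`v_I(p) ∈ 𝓘` for all `p ∈ Σ` is a model of some member of `Δ`. -/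
theorem completeness_induction_step (L : FVLogic) (𝓘 : Set L.V) (S Θ : Set ℕ) (q : ℕ)
    (hq : q ∉ Θ) (Γ Δ : Set (FVLogic.Formula L))
    (h : METrue 𝓘 S Γ Δ (insert q Θ)) :
    METrue 𝓘 (insert q S) Γ Δ Θ ∧
      (∀ I : ℕ → L.V, IsMinModel 𝓘 (Θ ∪ S) Γ I → I q ∉ 𝓘 → (∀ p ∈ S, I p ∈ 𝓘) →
        ∃ δ ∈ Δ, IsModel I δ) :=
  completeness_induction_step_general L 𝓘 S Θ q Γ Δ h
end
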